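/- For every permutation w of {1,…,n}: raj(w) = raj(Φ(w)) = raj(Φ_inv(w)); moreover rajcode(Φ_inv(w)) = rajcode(w). -/

import Mathlib

open scoped Classical

noncomputable section

namespace RajRegularity

variable {n : ℕ}

/-- Maximal length of an increasing subsequence of `w(i), …, w(n)` beginning with `w(i)`:
the largest cardinality of a set `s` of positions that contains `i`, consists of positions
`≥ i`, and on which `w` is strictly increasing. -/
def lisFrom (w : Equiv.Perm (Fin n)) (i : Fin n) : ℕ :=
  (Finset.univ.filter fun s : Finset (Fin n) =>
      i ∈ s ∧ (∀ j ∈ s, i ≤ j) ∧ ∀ j ∈ s, ∀ k ∈ s, j < k → w j < w k).sup Finset.card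

/-- `rajCode w i = (n − i + 1) −` (maximal length of an increasing subsequence of
`w(i), …, w(n)` beginning with `w(i)`); here positions are 0-based, so the number of
positions `≥ i` is `n - i`. -/
def rajCode (w : Equiv.Perm (Fin n)) (i : Fin n) : ℕ :=
  (n - (i : ℕ)) - lisFrom w i

/-- The Rajchgot index `raj w = Σᵢ rajCode w i`. -/
def raj (w : Equiv.Perm (Fin n)) : ℕ := ∑ i, rajCode w i

/-- The number of inversions of `w`: pairs of positions `i < j` with `w i > w j`. -/
def invNum (w : Equiv.Perm (Fin n)) : ℕ :=
  (Finset.univ.filter fun p : Fin n × Fin n => p.1 < p.2 ∧ w p.2 < w p.1).card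

/-- The `i`-th entry of the inv code: `ℓ_i(w) = #{ j : i < j, w j < w i }`. -/
def ellCode (w : Equiv.Perm (Fin n)) (i : Fin n) : ℕ :=
  (Finset.univ.filter fun j : Fin n => i < j ∧ w j < w i).card

/-- The set of descent positions of `w` (0-based position `j` with `w j > w (j+1)`). -/
def descents (w : Equiv.Perm (Fin n)) : Finset (Fin n) :=
  Finset.univ.filter fun j : Fin n =>
    if h : (j : ℕ) + 1 < n then w ⟨(j : ℕ) + 1, h⟩ < w j else False

/-- The major index: the sum of the (1-based) descent positions of `w`. -/
def maj (w : Equiv.Perm (Fin n)) : ℕ := ∑ j ∈ descents w, ((j : ℕ) + 1)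

/-- `mCode w i`: the number of descents of `w` at positions `≥ i`. -/
def mCode (w : Equiv.Perm (Fin n)) (i : Fin n) : ℕ :=
  ((descents w).filter fun j => i ≤ j).card

/-- `w` is dominant iff it avoids the pattern 132. -/
def Dominant (w : Equiv.Perm (Fin n)) : Prop :=
  ¬ ∃ i j k : Fin n, i < j ∧ j < k ∧ w i < w k ∧ w k < w j

/-- `w` is fireworks iff there are no positions `i < j` with `w j < w (j+1) < w i`. -/
def Fireworks (w : Equiv.Perm (Fin n)) : Prop :=
  ¬ ∃ (i j : Fin n) (h : (j : ℕ) + 1 < n),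
      i < j ∧ w j < w ⟨(j : ℕ) + 1, h⟩ ∧ w ⟨(j : ℕ) + 1, h⟩ < w i

/-- `w` is inverse fireworks iff `w⁻¹` is fireworks. -/
def InvFireworks (w : Equiv.Perm (Fin n)) : Prop := Fireworks w⁻¹

/-- `w` is a valley permutation: for some `a`, it is strictly decreasing on positions `≤ a`
and strictly increasing on positions `≥ a`. -/
def Valley (w : Equiv.Perm (Fin n)) : Prop :=
  ∃ a : ℕ, (∀ i j : Fin n, i < j → (j : ℕ) ≤ a → w j < w i) ∧
    ∀ i j : Fin n, a ≤ (i : ℕ) → i < j → w i < w j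

/-- `eps w i` is the (1-based) blob index `ε_i(w) = i + r_i(w)`. -/
def eps (w : Equiv.Perm (Fin n)) (i : Fin n) : ℕ := (i : ℕ) + 1 + rajCode w i

/-- The shape of `w`: `α_k(w) = #{ i : ε_i(w) = k }` (here `k : Fin n` stands for the
1-based index `k + 1`). -/
def shape (w : Equiv.Perm (Fin n)) : Fin n → ℕ := fun k =>
  (Finset.univ.filter fun i : Fin n => eps w i = (k : ℕ) + 1).card

/-- Dominance order on shapes: `α ⪰ β` iff every tail sum of `α` is at least the
corresponding tail sum of `β`. -/
def Dominates (α β : Fin n → ℕ) : Prop :=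
  ∀ m : Fin n,
    ∑ k ∈ Finset.univ.filter (fun k : Fin n => m ≤ k), β k ≤
      ∑ k ∈ Finset.univ.filter (fun k : Fin n => m ≤ k), α k

/-- Right weak order: `u ≤_R w` iff `w = u * v` length-additively. -/
def leR (u w : Equiv.Perm (Fin n)) : Prop :=
  ∃ v : Equiv.Perm (Fin n), w = u * v ∧ invNum w = invNum u + invNum v

/-- Left weak order: `u ≤_L w` iff `w = v * u` length-additively. -/
def leL (u w : Equiv.Perm (Fin n)) : Prop :=
  ∃ v : Equiv.Perm (Fin n), w = v * u ∧ invNum w = invNum v + invNum u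

/-- Two-sided weak order: the transitive closure of the union of left and right weak
orders (both are reflexive, so we may use the reflexive-transitive closure). -/
def leLR (u w : Equiv.Perm (Fin n)) : Prop :=
  Relation.ReflTransGen (fun a b : Equiv.Perm (Fin n) => leL a b ∨ leR a b) u w

/-- The maximum of the block of the set partition `π(w)` containing the value `v`;
the block of `v` is `{ v' : ε_{w⁻¹ v'}(w) = ε_{w⁻¹ v}(w) }`. -/
def blockMax (w : Equiv.Perm (Fin n)) (v : Fin n) : ℕ :=
  ((Finset.univ.filter fun v' : Fin n => eps w (w⁻¹ v') = eps w (w⁻¹ v)).max'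
      ⟨v, Finset.mem_filter.mpr ⟨Finset.mem_univ v, rfl⟩⟩).val

/-- The fireworks map `Φ`: the one-line word of `Φ w` lists the blocks of `π(w)` in
increasing order of their maxima, each block written in decreasing order.  Equivalently,
`Φ w` sorts the values by the key (max of block, value reversed), lexicographically. -/
def Phi (w : Equiv.Perm (Fin n)) : Equiv.Perm (Fin n) :=
  Tuple.sort fun v : Fin n => n * blockMax w v + (n - 1 - (v : ℕ))

/-- The inverse fireworks map `Φ_inv w = Φ(w⁻¹)⁻¹`. -/
def PhiInv (w : Equiv.Perm (Fin n)) : Equiv.Perm (Fin n) := (Phi w⁻¹)⁻¹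

/-- Partial sums of a sequence of block sizes. -/
def psum (a : ℕ → ℕ) (m : ℕ) : ℕ := ∑ j ∈ Finset.range m, a j

/-- The index of the block (interval `[psum a m, psum a (m+1))`) containing the value `v`. -/
def blockIdx (n : ℕ) (a : ℕ → ℕ) (v : Fin n) : ℕ :=
  ((Finset.range n).filter fun m => psum a (m + 1) ≤ (v : ℕ)).card

/-- The layered permutation with block sizes `a 0, a 1, …`: it reverses each of the
consecutive intervals `[psum a m, psum a (m+1))` of `{0, …, n-1}`.  Equivalently, its
one-line word sorts the values by (block index, value reversed) lexicographically. -/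
def layered (n : ℕ) (a : ℕ → ℕ) : Equiv.Perm (Fin n) :=
  Tuple.sort fun v : Fin n => n * blockIdx n a v + (n - 1 - (v : ℕ))

/-- The layered permutation `e_α` associated to a shape `α : Fin n → ℕ`. -/
def eOf (α : Fin n → ℕ) : Equiv.Perm (Fin n) :=
  layered n fun m => if h : m < n then α ⟨m, h⟩ else 0
/-!
Write `L_i(w)` for the length of a longest increasing subsequence of `w` starting at position
`i`, so that `ε_i(w) = n + 1 - L_i(w)` and the blocks of `π(w)` are the level sets of the value
level `v ↦ L_{w⁻¹ v}(w)`. From a value of level `≥ 2` one can always step to a larger value of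
level one less, so block maxima strictly decrease as the level grows. Hence `Φ(w)` lists the
values by decreasing level, each level in decreasing order, and in such a word every value keeps
its level: a positive function `g` with `g q < g p` along every ascent `p < q` which drops by
exactly one along some ascent out of every `p` with `g p ≥ 2` must be `L`. So `Φ` permutes the
multiset of `L`-values, which fixes `raj`. For `Φ_inv` one adds that `L` is invariant under
inversion, `L_{w i}(w⁻¹) = L_i(w)`, which gives `L_i(Φ_inv w) = L_i(w)` for every `i`.
-/

section lisFrom

variable {w : Equiv.Perm (Fin n)} {i j : Fin n} {s : Finset (Fin n)}

private lemma mem_filter_iff_isLeast_strictMonoOn :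
    s ∈ (Finset.univ.filter fun s : Finset (Fin n) =>
      i ∈ s ∧ (∀ j ∈ s, i ≤ j) ∧ ∀ j ∈ s, ∀ k ∈ s, j < k → w j < w k) ↔
      IsLeast (s : Set (Fin n)) i ∧ StrictMonoOn w s := by
  simp [IsLeast, lowerBounds, StrictMonoOn, and_assoc]

lemma card_le_lisFrom (hi : IsLeast (s : Set (Fin n)) i) (hw : StrictMonoOn w s) :
    s.card ≤ lisFrom w i :=
  Finset.le_sup (mem_filter_iff_isLeast_strictMonoOn.mpr ⟨hi, hw⟩)

lemma lisFrom_le {m : ℕ}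
    (h : ∀ s : Finset (Fin n), IsLeast (s : Set (Fin n)) i → StrictMonoOn w s → s.card ≤ m) :
    lisFrom w i ≤ m :=
  Finset.sup_le fun s hs => (mem_filter_iff_isLeast_strictMonoOn.mp hs).elim (h s)

lemma exists_card_eq_lisFrom (w : Equiv.Perm (Fin n)) (i : Fin n) :
    ∃ s : Finset (Fin n), IsLeast (s : Set (Fin n)) i ∧ StrictMonoOn w s ∧
      s.card = lisFrom w i := by
  obtain ⟨s, hs, h⟩ := Finset.exists_mem_eq_sup _ ⟨{i}, mem_filter_iff_isLeast_strictMonoOn.mpr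
    ⟨by rw [Finset.coe_singleton]; exact isLeast_singleton, by simp⟩⟩ Finset.card
  obtain ⟨hi, hw⟩ := mem_filter_iff_isLeast_strictMonoOn.mp hs
  exact ⟨s, hi, hw, h.symm⟩

lemma one_le_lisFrom (w : Equiv.Perm (Fin n)) (i : Fin n) : 1 ≤ lisFrom w i :=
  card_le_lisFrom (w := w) (s := {i}) (by simp) (by simp)

lemma lisFrom_le_sub (w : Equiv.Perm (Fin n)) (i : Fin n) : lisFrom w i ≤ n - i :=
  lisFrom_le fun _ hi _ => (Finset.card_le_card fun _ hj => Finset.mem_Ici.mpr (hi.2 hj)).trans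
    (Fin.card_Ici i).le

lemma lisFrom_add_one_le (hij : i < j) (hw : w i < w j) : lisFrom w j + 1 ≤ lisFrom w i := by
  obtain ⟨s, hj, hs, hcard⟩ := exists_card_eq_lisFrom w j
  have hi : i ∉ s := fun h => (hj.2 h).not_gt hij
  have hleast : IsLeast (insert i s : Set (Fin n)) i :=
    ⟨Set.mem_insert i _, Set.forall_mem_insert.mpr ⟨le_rfl, fun k hk => hij.le.trans (hj.2 hk)⟩⟩
  have hmono : StrictMonoOn w (insert i s : Set (Fin n)) :=
    (strictMonoOn_insert_iff_of_forall_ge fun k hk => hij.le.trans (hj.2 hk)).mpr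
      ⟨fun k hk _ => hw.trans_le (hs.monotoneOn hj.1 hk (hj.2 hk)), hs⟩
  have := card_le_lisFrom (s := insert i s) (by simpa using hleast) (by simpa using hmono)
  rwa [Finset.card_insert_of_notMem hi, hcard] at this

lemma exists_lisFrom_add_one_eq (h : 2 ≤ lisFrom w i) :
    ∃ j, i < j ∧ w i < w j ∧ lisFrom w j + 1 = lisFrom w i := by
  obtain ⟨s, hi, hs, hcard⟩ := exists_card_eq_lisFrom w i
  have hne : (s.erase i).Nonempty := by
    rw [← Finset.card_pos, Finset.card_erase_of_mem hi.1, hcard]; omega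
  have hj := Finset.isLeast_min' _ hne
  set j := (s.erase i).min' hne
  have hjs : j ∈ s := Finset.mem_of_mem_erase hj.1
  have hij : i < j := (hi.2 hjs).lt_of_ne (Finset.ne_of_mem_erase hj.1).symm
  have hw : w i < w j := hs hi.1 hjs hij
  have hle := card_le_lisFrom hj (hs.mono (Finset.coe_subset.mpr (s.erase_subset i)))
  rw [Finset.card_erase_of_mem hi.1, hcard] at hle
  exact ⟨j, hij, hw, by have := lisFrom_add_one_le hij hw; omega⟩

lemma lisFrom_le_lisFrom_inv (w : Equiv.Perm (Fin n)) (i : Fin n) :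
    lisFrom w i ≤ lisFrom w⁻¹ (w i) := by
  obtain ⟨s, hi, hs, hcard⟩ := exists_card_eq_lisFrom w i
  have hleast : IsLeast (w '' s) (w i) :=
    ⟨Set.mem_image_of_mem w hi.1,
      Set.forall_mem_image.mpr fun j hj => hs.monotoneOn hi.1 hj (hi.2 hj)⟩
  have hmono : StrictMonoOn ⇑w⁻¹ (w '' s) := by
    rintro _ ⟨j, hj, rfl⟩ _ ⟨k, hk, rfl⟩ hjk
    simpa using (hs.lt_iff_lt hj hk).mp hjk
  have := card_le_lisFrom (s := s.image w) (by simpa using hleast) (by simpa using hmono)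
  rwa [Finset.card_image_of_injective s w.injective, hcard] at this

lemma lisFrom_inv_apply (w : Equiv.Perm (Fin n)) (i : Fin n) :
    lisFrom w⁻¹ (w i) = lisFrom w i :=
  le_antisymm (by simpa using lisFrom_le_lisFrom_inv w⁻¹ (w i)) (lisFrom_le_lisFrom_inv w i)

theorem lisFrom_eq_of_ascents {g : Fin n → ℕ}
    (hasc : ∀ p q, p < q → w p < w q → g q < g p) (hpos : ∀ p, 1 ≤ g p)
    (hdrop : ∀ p, 2 ≤ g p → ∃ q, p < q ∧ w p < w q ∧ g q + 1 = g p) (p : Fin n) :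
    lisFrom w p = g p := by
  induction p using WellFoundedGT.induction with
  | _ p ih =>
    have hle : lisFrom w p ≤ g p := by
      by_cases h : lisFrom w p ≤ 1
      · exact h.trans (hpos p)
      obtain ⟨q, hpq, hw, hq⟩ := exists_lisFrom_add_one_eq (by omega : 2 ≤ lisFrom w p)
      have := hasc p q hpq hw
      have := ih q hpq
      omega
    have hge : g p ≤ lisFrom w p := by
      by_cases h : g p ≤ 1
      · exact h.trans (one_le_lisFrom w p)
      obtain ⟨q, hpq, hw, hq⟩ := hdrop p (by omega)
      have := lisFrom_add_one_le hpq hw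
      have := ih q hpq
      omega
    exact le_antisymm hle hge

end lisFrom

def lisVal (w : Equiv.Perm (Fin n)) (v : Fin n) : ℕ := lisFrom w (w⁻¹ v)

section blocks

variable {w : Equiv.Perm (Fin n)} {a b v : Fin n}

lemma eps_eq (w : Equiv.Perm (Fin n)) (i : Fin n) : eps w i = n + 1 - lisFrom w i := by
  have := one_le_lisFrom w i
  have := lisFrom_le_sub w i
  have := i.isLt
  simp only [eps, rajCode]
  omega

lemma eps_inv_eq_iff : eps w (w⁻¹ a) = eps w (w⁻¹ b) ↔ lisVal w a = lisVal w b := by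
  have := lisFrom_le_sub w (w⁻¹ a)
  have := lisFrom_le_sub w (w⁻¹ b)
  rw [eps_eq, eps_eq, lisVal, lisVal]
  omega

def block (w : Equiv.Perm (Fin n)) (v : Fin n) : Finset (Fin n) :=
  Finset.univ.filter fun v' => lisVal w v' = lisVal w v

lemma mem_block : a ∈ block w v ↔ lisVal w a = lisVal w v := by
  simp [block]

lemma blockMax_eq (w : Equiv.Perm (Fin n)) (v : Fin n) :
    blockMax w v = ((block w v).max' ⟨v, mem_block.mpr rfl⟩).val := by
  simp only [blockMax, block, eps_inv_eq_iff]

lemma le_blockMax (h : lisVal w a = lisVal w v) : (a : ℕ) ≤ blockMax w v := by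
  rw [blockMax_eq]
  exact Finset.le_max' _ a (mem_block.mpr h)

lemma exists_lisVal_eq_blockMax (w : Equiv.Perm (Fin n)) (v : Fin n) :
    ∃ m : Fin n, lisVal w m = lisVal w v ∧ (m : ℕ) = blockMax w v := by
  rw [blockMax_eq]
  exact ⟨_, mem_block.mp (Finset.max'_mem _ _), rfl⟩

lemma blockMax_congr (h : lisVal w a = lisVal w b) : blockMax w a = blockMax w b := by
  simp only [blockMax_eq, block, h]

lemma exists_lt_lisVal_add_one_eq (h : 2 ≤ lisVal w v) :
    ∃ v', v < v' ∧ lisVal w v' + 1 = lisVal w v := by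
  obtain ⟨j, -, hw, hj⟩ := exists_lisFrom_add_one_eq h
  exact ⟨w j, by simpa using hw, by simpa [lisVal] using hj⟩

lemma exists_le_lisVal_add_eq (k : ℕ) (h : k < lisVal w v) :
    ∃ v', v ≤ v' ∧ lisVal w v' + k = lisVal w v := by
  induction k with
  | zero => exact ⟨v, le_rfl, rfl⟩
  | succ k ih =>
    obtain ⟨v₁, hv₁, hk⟩ := ih (by omega)
    obtain ⟨v₂, hv₂, hk'⟩ := exists_lt_lisVal_add_one_eq (w := w) (v := v₁) (by omega)
    exact ⟨v₂, hv₁.trans hv₂.le, by omega⟩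

/-- Walking down from the maximum `m` of the block of `b` reaches the level of `a` at a value
`> m`. -/
lemma blockMax_lt_blockMax (h : lisVal w a < lisVal w b) : blockMax w b < blockMax w a := by
  obtain ⟨m, hm, hmax⟩ := exists_lisVal_eq_blockMax w b
  have ha : 1 ≤ lisVal w a := one_le_lisFrom w _
  obtain ⟨v', hle, hv'⟩ := exists_le_lisVal_add_eq (w := w) (v := m) (lisVal w b - lisVal w a)
    (by omega)
  have hne : m ≠ v' := by rintro rfl; omega
  have := le_blockMax (w := w) (a := v') (v := a) (by omega)
  have := Fin.lt_def.mp (hle.lt_of_ne hne)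
  omega

lemma blockMax_lt_blockMax_iff : blockMax w b < blockMax w a ↔ lisVal w a < lisVal w b := by
  refine ⟨fun h => ?_, blockMax_lt_blockMax⟩
  rcases lt_trichotomy (lisVal w a) (lisVal w b) with hab | hab | hab
  · exact hab
  · exact absurd (blockMax_congr hab) (by omega)
  · exact absurd (blockMax_lt_blockMax hab) (by omega)

lemma blockMax_eq_blockMax_iff : blockMax w a = blockMax w b ↔ lisVal w a = lisVal w b := by
  refine ⟨fun h => ?_, blockMax_congr⟩
  rcases lt_trichotomy (lisVal w a) (lisVal w b) with hab | hab | hab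
  · exact absurd (blockMax_lt_blockMax hab) (by omega)
  · exact hab
  · exact absurd (blockMax_lt_blockMax hab) (by omega)

end blocks

lemma lt_or_eq_and_lt_of_key_le {B : Fin n → ℕ} {a b : Fin n} (hab : a ≠ b)
    (h : n * B a + (n - 1 - a) ≤ n * B b + (n - 1 - b)) :
    B a < B b ∨ B a = B b ∧ b < a := by
  have := a.isLt
  have := b.isLt
  rcases lt_trichotomy (B a) (B b) with hB | hB | hB
  · exact Or.inl hB
  · rw [hB] at h
    exact Or.inr ⟨hB, Fin.lt_def.mpr (by have := Fin.val_ne_of_ne hab; omega)⟩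
  · have : n * (B b + 1) ≤ n * B a := Nat.mul_le_mul_left n hB
    rw [Nat.mul_succ] at this
    omega

lemma lisVal_Phi_lex (w : Equiv.Perm (Fin n)) {p q : Fin n} (hpq : p < q) :
    lisVal w (Phi w q) < lisVal w (Phi w p) ∨
      lisVal w (Phi w q) = lisVal w (Phi w p) ∧ Phi w q < Phi w p := by
  have hkey := Tuple.monotone_sort (fun v : Fin n => n * blockMax w v + (n - 1 - (v : ℕ))) hpq.le
  rcases lt_or_eq_and_lt_of_key_le ((Phi w).injective.ne hpq.ne) hkey with h | ⟨h, hlt⟩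
  · exact Or.inl (blockMax_lt_blockMax_iff.mp h)
  · exact Or.inr ⟨(blockMax_eq_blockMax_iff.mp h).symm, hlt⟩

lemma lisFrom_Phi (w : Equiv.Perm (Fin n)) (p : Fin n) :
    lisFrom (Phi w) p = lisVal w (Phi w p) := by
  refine lisFrom_eq_of_ascents (g := fun p => lisVal w (Phi w p)) (fun p q hpq hw => ?_)
    (fun p => one_le_lisFrom w _) (fun p h => ?_) p
  · exact (lisVal_Phi_lex w hpq).resolve_right fun h => h.2.not_gt hw
  · obtain ⟨v, hv, hlev⟩ := exists_lt_lisVal_add_one_eq h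
    refine ⟨(Phi w)⁻¹ v, ?_, by simpa using hv, by simpa using hlev⟩
    by_contra! hle
    obtain hlt | rfl := hle.lt_or_eq
    · have := lisVal_Phi_lex w hlt
      simp only [Equiv.Perm.coe_inv, Equiv.apply_symm_apply] at this
      omega
    · simp at hv

lemma lisFrom_PhiInv (w : Equiv.Perm (Fin n)) (i : Fin n) :
    lisFrom (PhiInv w) i = lisFrom w i :=
  calc lisFrom (PhiInv w) i = lisFrom (Phi w⁻¹) (PhiInv w i) := by
        rw [← lisFrom_inv_apply (PhiInv w), PhiInv, inv_inv]
    _ = lisVal w⁻¹ i := by rw [lisFrom_Phi, PhiInv, Equiv.Perm.coe_inv, Equiv.apply_symm_apply]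
    _ = lisFrom w i := by rw [lisVal, inv_inv, lisFrom_inv_apply]

lemma raj_add_sum_lisFrom (w : Equiv.Perm (Fin n)) :
    raj w + ∑ i, lisFrom w i = ∑ i : Fin n, (n - i) := by
  rw [raj, ← Finset.sum_add_distrib]
  exact Finset.sum_congr rfl fun i _ => Nat.sub_add_cancel (lisFrom_le_sub w i)

lemma sum_lisFrom_Phi (w : Equiv.Perm (Fin n)) :
    ∑ i, lisFrom (Phi w) i = ∑ i, lisFrom w i :=
  calc ∑ i, lisFrom (Phi w) i = ∑ v, lisVal w (Phi w v) := by simp only [lisFrom_Phi]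
    _ = ∑ v, lisFrom w (w⁻¹ v) := Equiv.sum_comp (Phi w) (lisVal w)
    _ = ∑ i, lisFrom w i := Equiv.sum_comp w⁻¹ (lisFrom w)

/-- `raj(w) = raj(Φ(w)) = raj(Φ_inv(w))`, and moreover
`rajcode(Φ_inv(w)) = rajcode(w)`. -/
theorem raj_phi_eq (n : ℕ) (w : Equiv.Perm (Fin n)) :
    raj (Phi w) = raj w ∧ raj (PhiInv w) = raj w ∧
    ∀ i : Fin n, rajCode (PhiInv w) i = rajCode w i := by
  have hcode (i : Fin n) : rajCode (PhiInv w) i = rajCode w i := by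
    rw [rajCode, rajCode, lisFrom_PhiInv]
  refine ⟨?_, Finset.sum_congr rfl fun i _ => hcode i, hcode⟩
  have hPhi := raj_add_sum_lisFrom (Phi w)
  rw [sum_lisFrom_Phi, ← raj_add_sum_lisFrom w] at hPhi
  exact Nat.add_right_cancel hPhi

end RajRegularity
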